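/- There exists a universal constant C > 0 with the following property. Let ℓ > 0, let c ∈ ℝ³, let Q₁ be a cube with center c and side length ℓ, and let Q₂ ⊂ B_{10ℓ}(c) be a cube of side length in [ℓ/4, 4ℓ]. Then for every v ∈ L¹(B_{10ℓ}(c)): ∫_{Q₁} ∫_{Q₂} ∫_{[x₁,x₂]} |v(z)| dH¹(z) dx₂ dx₁ ≤ C·ℓ⁴ ∫_{B_{10ℓ}(c)} |v(z)| dz = C·ℓ⁷ ⨍_{B_{10ℓ}(c)} |v(z)| dz. -/

import Mathlib

/-! Parametrizing `[x₁, x₂]` by `t ↦ (1 - t) x₁ + t x₂`, whose speed is `|x₁ - x₂| ≤ 11ℓ`, bounds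
the segment integral by `11ℓ ∫₀¹ |v|((1 - t) x₁ + t x₂) dt`. Exchange the order of integration.
For `t ≥ 1/2` the substitution `x₂ ↦ (1 - t) x₁ + t x₂` has Jacobian `t⁻³ ≤ 8`, so the integral
over `x₂` is at most `8 ‖v‖₁`; for `t ≤ 1/2` the same holds for `x₁` with Jacobian `(1 - t)⁻³`.
The remaining variable then only contributes the volume `|Q₁| + |Q₂| ≤ 65ℓ³`. -/

open MeasureTheory Metric ENNReal

noncomputable section

local notation "E3" => EuclideanSpace ℝ (Fin 3)

def cube (c : E3) (l : ℝ) : Set E3 :=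
  {x | ∀ i : Fin 3, |x i - c i| ≤ l / 2}

open Set Module

theorem ENNReal.mul_le_mul_mul_inv_mul (x J : ℝ≥0∞) {y V : ℝ≥0∞} (hV₀ : V ≠ 0) (hVy : V ≤ y)
    (hy : y ≠ ∞) : x * J ≤ x * y * (V⁻¹ * J) :=
  calc x * J = x * (V * V⁻¹) * J := by
        rw [ENNReal.mul_inv_cancel hV₀ (ne_top_of_le_ne_top hy hVy), mul_one]
    _ ≤ x * (y * V⁻¹) * J := by gcongr
    _ = x * y * (V⁻¹ * J) := by rw [mul_assoc x, mul_assoc, mul_assoc]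

theorem AEMeasurable.exists_measurable_ge_lintegral_eq {α : Type*} [MeasurableSpace α]
    {μ : Measure α} {f : α → ℝ≥0∞} (hf : AEMeasurable f μ) :
    ∃ g : α → ℝ≥0∞, Measurable g ∧ f ≤ g ∧ ∫⁻ a, g a ∂μ = ∫⁻ a, f a ∂μ := by
  classical
  obtain ⟨N, hfN, hN, hN0⟩ := exists_measurable_superset_of_null (ae_iff.1 hf.ae_eq_mk)
  refine ⟨N.piecewise (fun _ ↦ ∞) (hf.mk f), measurable_const.piecewise hN hf.measurable_mk,
    fun x ↦ ?_, ?_⟩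
  · by_cases hx : x ∈ N
    · simp [hx]
    · simp only [piecewise_eq_of_notMem _ _ _ hx]
      exact (not_not.1 fun h ↦ hx (hfN h)).le
  · refine (lintegral_congr_ae ?_).trans (lintegral_congr_ae hf.ae_eq_mk.symm)
    filter_upwards [measure_eq_zero_iff_ae_notMem.1 hN0] with x hx
    simp [hx]

theorem exists_measurable_ge_lintegral_eq_setLIntegral {α : Type*} [MeasurableSpace α]
    {μ : Measure α} {s : Set α} (hs : MeasurableSet s) {v : α → ℝ}
    (hv : AEStronglyMeasurable v (μ.restrict s)) (hv0 : ∀ x ∉ s, v x = 0) :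
    ∃ g : α → ℝ≥0∞, Measurable g ∧ (fun x ↦ ENNReal.ofReal |v x|) ≤ g ∧
      ∫⁻ x, g x ∂μ = ∫⁻ x in s, ENNReal.ofReal |v x| ∂μ := by
  have hsupp : Function.support v ⊆ s := Function.support_subset_iff'.2 hv0
  have hvm : AEStronglyMeasurable v μ :=
    indicator_eq_self.2 hsupp ▸ (aestronglyMeasurable_indicator_iff hs).2 hv
  rw [setLIntegral_eq_of_support_subset fun x hx ↦ hsupp fun h ↦ hx (by simp [h])]
  exact hvm.aemeasurable.abs.ennreal_ofReal.exists_measurable_ge_lintegral_eq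

theorem LipschitzWith.setLIntegral_image_le {X Y : Type*} [EMetricSpace X] [EMetricSpace Y]
    [MeasurableSpace X] [BorelSpace X] [MeasurableSpace Y] [BorelSpace Y]
    {K : NNReal} {f : X → Y} (hf : LipschitzWith K f) {d : ℝ} (hd : 0 ≤ d) (s : Set X)
    (g : Y → ℝ≥0∞) :
    ∫⁻ y in f '' s, g y ∂μH[d] ≤ (K : ℝ≥0∞) ^ d * ∫⁻ x in s, g (f x) ∂μH[d] := by
  have hmeas : Measurable f := hf.continuous.measurable
  have hle : (μH[d] : Measure Y).restrict (f '' s) ≤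
      ((K : ℝ≥0∞) ^ d) • ((μH[d] : Measure X).restrict s).map f := by
    refine Measure.le_iff.2 fun t ht ↦ ?_
    rw [Measure.restrict_apply ht, Measure.smul_apply, Measure.map_apply hmeas ht,
      Measure.restrict_apply (hmeas ht), smul_eq_mul]
    calc μH[d] (t ∩ f '' s) ≤ μH[d] (f '' (f ⁻¹' t ∩ s)) := by
          rw [image_preimage_inter, inter_comm]
      _ ≤ _ := hf.hausdorffMeasure_image_le hd _
  calc ∫⁻ y in f '' s, g y ∂μH[d]
      ≤ ∫⁻ y, g y ∂(((K : ℝ≥0∞) ^ d) • ((μH[d] : Measure X).restrict s).map f) :=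
        lintegral_mono' hle le_rfl
    _ ≤ _ := by
        rw [lintegral_smul_measure, smul_eq_mul]
        gcongr
        exact lintegral_map_le _ _

section Segment

variable {E : Type*} [NormedAddCommGroup E] [NormedSpace ℝ E] [MeasurableSpace E] [BorelSpace E]

theorem setLIntegral_segment_le (g : E → ℝ≥0∞) (x y : E) :
    ∫⁻ z in segment ℝ x y, g z ∂μH[1] ≤
      edist x y * ∫⁻ t in Icc (0 : ℝ) 1, g (AffineMap.lineMap x y t) := by
  have h := (lipschitzWith_lineMap (𝕜 := ℝ) x y).setLIntegral_image_le zero_le_one (Icc 0 1) g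
  rwa [← segment_eq_image_lineMap, ENNReal.rpow_one, hausdorffMeasure_real, ← edist_nndist] at h

variable [FiniteDimensional ℝ E] (μ : Measure E) [μ.IsAddHaarMeasure]

theorem lintegral_comp_add_smul {g : E → ℝ≥0∞} (hg : Measurable g) (b : E) {a : ℝ}
    (ha : a ≠ 0) :
    ∫⁻ y, g (b + a • y) ∂μ = ENNReal.ofReal |(a ^ finrank ℝ E)⁻¹| * ∫⁻ y, g y ∂μ := by
  rw [← lintegral_map (f := fun z ↦ g (b + z)) (by fun_prop) (by fun_prop),
    Measure.map_addHaar_smul μ ha, lintegral_smul_measure, smul_eq_mul,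
    lintegral_add_left_eq_self]

theorem lintegral_comp_lineMap_le {g : E → ℝ≥0∞} (hg : Measurable g) (x : E) {t : ℝ}
    (ht : 1 / 2 ≤ t) :
    ∫⁻ y, g (AffineMap.lineMap x y t) ∂μ ≤ 2 ^ finrank ℝ E * ∫⁻ y, g y ∂μ := by
  have ht₀ : 0 < t := by linarith
  simp only [AffineMap.lineMap_apply_module]
  rw [lintegral_comp_add_smul μ hg _ ht₀.ne', abs_of_pos (by positivity), ← inv_pow]
  gcongr
  calc ENNReal.ofReal (t⁻¹ ^ finrank ℝ E) ≤ ENNReal.ofReal (2 ^ finrank ℝ E) := by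
        gcongr
        rw [inv_le_comm₀ ht₀ two_pos]
        linarith
    _ = 2 ^ finrank ℝ E := by simp

theorem setLIntegral_setLIntegral_comp_lineMap_le {g : E → ℝ≥0∞} (hg : Measurable g)
    (A B : Set E) {t : ℝ} (ht : 1 / 2 ≤ t) :
    ∫⁻ x in A, ∫⁻ y in B, g (AffineMap.lineMap x y t) ∂μ ∂μ ≤
      2 ^ finrank ℝ E * μ A * ∫⁻ y, g y ∂μ :=
  calc ∫⁻ x in A, ∫⁻ y in B, g (AffineMap.lineMap x y t) ∂μ ∂μ
      ≤ ∫⁻ _ in A, 2 ^ finrank ℝ E * ∫⁻ y, g y ∂μ ∂μ :=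
        lintegral_mono fun x ↦
          (setLIntegral_le_lintegral _ _).trans (lintegral_comp_lineMap_le μ hg x ht)
    _ = 2 ^ finrank ℝ E * μ A * ∫⁻ y, g y ∂μ := by
        rw [setLIntegral_const, mul_right_comm]

theorem setLIntegral_setLIntegral_comp_lineMap_le_add {g : E → ℝ≥0∞} (hg : Measurable g)
    (A B : Set E) (t : ℝ) :
    ∫⁻ x in A, ∫⁻ y in B, g (AffineMap.lineMap x y t) ∂μ ∂μ ≤
      2 ^ finrank ℝ E * (μ A + μ B) * ∫⁻ y, g y ∂μ := by
  rw [mul_add, add_mul]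
  rcases le_or_gt (1 / 2) t with ht | ht
  · exact (setLIntegral_setLIntegral_comp_lineMap_le μ hg A B ht).trans le_self_add
  · refine le_add_left ?_
    have hswap := lintegral_lintegral_swap (μ := μ.restrict A) (ν := μ.restrict B)
      (f := fun x y ↦ g (AffineMap.lineMap x y t)) (hg.comp (by fun_prop)).aemeasurable
    rw [hswap]
    simp_rw [← AffineMap.lineMap_apply_one_sub _ _ t]
    exact setLIntegral_setLIntegral_comp_lineMap_le μ hg B A (by linarith)

theorem setLIntegral_setLIntegral_segment_le {g : E → ℝ≥0∞} (hg : Measurable g) {A B : Set E}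
    (hA : MeasurableSet A) (hB : MeasurableSet B) {D : ℝ} (hD : ∀ x ∈ A, ∀ y ∈ B, dist x y ≤ D) :
    ∫⁻ x in A, ∫⁻ y in B, ∫⁻ z in segment ℝ x y, g z ∂μH[1] ∂μ ∂μ ≤
      ENNReal.ofReal D * (2 ^ finrank ℝ E * (μ A + μ B) * ∫⁻ y, g y ∂μ) := by
  have hF : ∀ x, Measurable fun p : E × ℝ ↦ g (AffineMap.lineMap x p.1 p.2) :=
    fun x ↦ hg.comp (by fun_prop)
  have hG : Measurable fun p : E × ℝ ↦ ∫⁻ y in B, g (AffineMap.lineMap p.1 y p.2) ∂μ :=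
    Measurable.lintegral_prod_right'
      (f := fun q : (E × ℝ) × E ↦ g (AffineMap.lineMap q.1.1 q.2 q.1.2)) (hg.comp (by fun_prop))
  calc ∫⁻ x in A, ∫⁻ y in B, ∫⁻ z in segment ℝ x y, g z ∂μH[1] ∂μ ∂μ
      ≤ ∫⁻ x in A, ∫⁻ y in B, (ENNReal.ofReal D *
          ∫⁻ t in Icc (0 : ℝ) 1, g (AffineMap.lineMap x y t)) ∂μ ∂μ := by
        refine setLIntegral_mono' hA fun x hx ↦ setLIntegral_mono' hB fun y hy ↦ ?_
        refine (setLIntegral_segment_le g x y).trans ?_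
        rw [edist_dist]
        gcongr
        exact hD x hx y hy
    _ = ENNReal.ofReal D * ∫⁻ t in Icc (0 : ℝ) 1,
          ∫⁻ x in A, ∫⁻ y in B, g (AffineMap.lineMap x y t) ∂μ ∂μ := by
        simp_rw [lintegral_const_mul' _ _ ofReal_ne_top]
        refine congrArg _ ((lintegral_congr fun x ↦ ?_).trans
          (lintegral_lintegral_swap hG.aemeasurable))
        exact lintegral_lintegral_swap (hF x).aemeasurable
    _ ≤ ENNReal.ofReal D *
          ∫⁻ _ in Icc (0 : ℝ) 1, 2 ^ finrank ℝ E * (μ A + μ B) * ∫⁻ y, g y ∂μ := by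
        gcongr with t
        exact setLIntegral_setLIntegral_comp_lineMap_le_add μ hg A B t
    _ = ENNReal.ofReal D * (2 ^ finrank ℝ E * (μ A + μ B) * ∫⁻ y, g y ∂μ) := by
        rw [setLIntegral_const, Real.volume_Icc, sub_zero, ofReal_one, mul_one]

end Segment

theorem measurableSet_cube (c : E3) (l : ℝ) : MeasurableSet (cube c l) := by
  simp only [cube, ofPred_forall]
  exact MeasurableSet.iInter fun i ↦ measurableSet_le (by fun_prop) measurable_const

theorem volume_cube (c : E3) {l : ℝ} (hl : 0 ≤ l) :
    volume (cube c l) = ENNReal.ofReal (l ^ 3) := by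
  have hl₂ : 0 ≤ l / 2 := by positivity
  have hcube : cube c l = WithLp.ofLp ⁻¹' closedBall (WithLp.ofLp c) (l / 2) := by
    ext x
    simp only [cube, mem_ofPred_eq, mem_preimage, mem_closedBall, dist_pi_le_iff hl₂, Real.dist_eq]
  rw [hcube, (PiLp.volume_preserving_ofLp (Fin 3)).measure_preimage
    measurableSet_closedBall.nullMeasurableSet, Real.volume_pi_closedBall _ hl₂, Fintype.card_fin,
    mul_div_cancel₀ _ two_ne_zero]

theorem dist_le_of_mem_cube {c x : E3} {l : ℝ} (hx : x ∈ cube c l) (hl : 0 ≤ l) :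
    dist x c ≤ l := by
  have h : ∀ i, dist (x i) (c i) ^ 2 ≤ (l / 2) ^ 2 := fun i ↦
    pow_le_pow_left₀ dist_nonneg (by rw [Real.dist_eq]; exact hx i) 2
  rw [EuclideanSpace.dist_eq, Real.sqrt_le_left hl, Fin.sum_univ_three]
  nlinarith [h 0, h 1, h 2]

theorem volume_ball_le (c : E3) {r : ℝ} (hr : 0 ≤ r) :
    volume (ball c r) ≤ ENNReal.ofReal (6 * r ^ 3) := by
  rw [EuclideanSpace.volume_ball_fin_three, ← ofReal_pow hr, ← ofReal_mul (by positivity)]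
  exact ENNReal.ofReal_le_ofReal (by nlinarith [Real.pi_lt_four, pow_nonneg hr 3])

theorem setLIntegral_cube_setLIntegral_cube_segment_le {ℓ l₂ : ℝ} (hℓ : 0 ≤ ℓ) (hl₂ : 0 ≤ l₂)
    (hl₂ℓ : l₂ ≤ 4 * ℓ) {c c₂ : E3} (hQ₂ : cube c₂ l₂ ⊆ ball c (10 * ℓ)) {g : E3 → ℝ≥0∞}
    (hg : Measurable g) :
    ∫⁻ x₁ in cube c ℓ, ∫⁻ x₂ in cube c₂ l₂, ∫⁻ z in segment ℝ x₁ x₂, g z ∂μH[1] ≤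
      ENNReal.ofReal (6000 * ℓ ^ 4) * ∫⁻ z, g z := by
  have hdist : ∀ x ∈ cube c ℓ, ∀ y ∈ cube c₂ l₂, dist x y ≤ 11 * ℓ := fun x hx y hy ↦ by
    linarith [dist_triangle_right x y c, dist_le_of_mem_cube hx hℓ, mem_ball.1 (hQ₂ hy)]
  have hvol : volume (cube c ℓ) + volume (cube c₂ l₂) ≤ ENNReal.ofReal (65 * ℓ ^ 3) := by
    rw [volume_cube c hℓ, volume_cube c₂ hl₂, ← ofReal_add (by positivity) (by positivity)]
    exact ENNReal.ofReal_le_ofReal (by nlinarith [pow_le_pow_left₀ hl₂ hl₂ℓ 3])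
  calc ∫⁻ x₁ in cube c ℓ, ∫⁻ x₂ in cube c₂ l₂, ∫⁻ z in segment ℝ x₁ x₂, g z ∂μH[1]
      ≤ ENNReal.ofReal (11 * ℓ) *
          (2 ^ 3 * (volume (cube c ℓ) + volume (cube c₂ l₂)) * ∫⁻ z, g z) := by
        simpa only [finrank_euclideanSpace_fin] using setLIntegral_setLIntegral_segment_le volume hg
          (measurableSet_cube c ℓ) (measurableSet_cube c₂ l₂) hdist
    _ ≤ ENNReal.ofReal (11 * ℓ) *
          (ENNReal.ofReal 8 * ENNReal.ofReal (65 * ℓ ^ 3) * ∫⁻ z, g z) := by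
        rw [ofReal_ofNat]
        gcongr
        norm_num
    _ ≤ ENNReal.ofReal (6000 * ℓ ^ 4) * ∫⁻ z, g z := by
        rw [← ofReal_mul (by norm_num), ← mul_assoc, ← ofReal_mul (by positivity)]
        exact mul_le_mul_left (ENNReal.ofReal_le_ofReal (by nlinarith [pow_nonneg hℓ 4])) _

/-- **Scaled version of Lemma 3.8 (a).** For a cube `Q₁` of side `ℓ` centered at `c`
and a comparable cube `Q₂ ⊂ B_{10ℓ}(c)`, the iterated segment integral of `|v|` is
bounded by `C ℓ⁴ ∫_{B_{10ℓ}(c)} |v| = C ℓ⁷ ⨍_{B_{10ℓ}(c)} |v|`. -/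
theorem segment_integral_bound_scaled :
    ∃ C : ℝ, 0 < C ∧
      ∀ (ℓ : ℝ), 0 < ℓ → ∀ (c : E3) (c₂ : E3) (l₂ : ℝ),
        ℓ / 4 ≤ l₂ → l₂ ≤ 4 * ℓ → cube c₂ l₂ ⊆ ball c (10 * ℓ) →
        ∀ v : E3 → ℝ, IntegrableOn v (ball c (10 * ℓ)) →
          (∀ x ∉ ball c (10 * ℓ), v x = 0) →
          (∫⁻ x₁ in cube c ℓ, ∫⁻ x₂ in cube c₂ l₂,
              ∫⁻ z in segment ℝ x₁ x₂, ENNReal.ofReal |v z| ∂(μH[1])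
            ≤ ENNReal.ofReal (C * ℓ ^ 4) *
                ∫⁻ z in ball c (10 * ℓ), ENNReal.ofReal |v z|) ∧
          (∫⁻ x₁ in cube c ℓ, ∫⁻ x₂ in cube c₂ l₂,
              ∫⁻ z in segment ℝ x₁ x₂, ENNReal.ofReal |v z| ∂(μH[1])
            ≤ ENNReal.ofReal (C * ℓ ^ 7) *
                ((volume (ball c (10 * ℓ)))⁻¹ *
                  ∫⁻ z in ball c (10 * ℓ), ENNReal.ofReal |v z|)) := by
  refine ⟨6000 * 6000, by norm_num, fun ℓ hℓ c c₂ l₂ hl₂ hl₂' hQ₂ v hv hv0 ↦ ?_⟩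
  -- `|v|` is only a.e. measurable, and segments are Lebesgue-null: pass to a Borel majorant.
  obtain ⟨g, hg, hvg, hgJ⟩ :=
    exists_measurable_ge_lintegral_eq_setLIntegral measurableSet_ball hv.1 hv0
  have key := calc
    ∫⁻ x₁ in cube c ℓ, ∫⁻ x₂ in cube c₂ l₂, ∫⁻ z in segment ℝ x₁ x₂, ENNReal.ofReal |v z| ∂(μH[1])
      ≤ ∫⁻ x₁ in cube c ℓ, ∫⁻ x₂ in cube c₂ l₂, ∫⁻ z in segment ℝ x₁ x₂, g z ∂(μH[1]) := by
        gcongr with x₁ x₂ z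
        exact hvg z
    _ ≤ ENNReal.ofReal (6000 * ℓ ^ 4) * ∫⁻ z in ball c (10 * ℓ), ENNReal.ofReal |v z| :=
        hgJ ▸ setLIntegral_cube_setLIntegral_cube_segment_le hℓ.le (by linarith) hl₂' hQ₂ hg
  refine ⟨key.trans (by gcongr; nlinarith [pow_pos hℓ 4]), key.trans ?_⟩
  have hr : 0 < 10 * ℓ := by positivity
  refine (ENNReal.mul_le_mul_mul_inv_mul _ _ (measure_ball_pos volume c hr).ne'
    (volume_ball_le c hr.le) ofReal_ne_top).trans_eq ?_
  rw [← ofReal_mul (by positivity)]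
  ring_nf
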